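/- arXiv:2404.08608 — 2 statements merged into one kernel-verified Lean document; each statement's English description precedes it below -/
import Mathlib

section
/- (Pointwise form of the hyperbolic-Voronoi-to-power-diagram correspondence.) Let x, p, q be points in the open unit ball of ℝⁿ, and let s_p = p/(2√(1 − ‖p‖²)), w_p = ‖p‖²/(4(1 − ‖p‖²)) − 1/√(1 − ‖p‖²), and similarly for q. Then d_K(x,p) ≤ d_K(x,q) if and only if ‖x − s_p‖² − w_p ≤ ‖x − s_q‖² − w_q. -/
open RealInnerProductSpace

/-- Real inverse hyperbolic cosine, defined on `[1, ∞)`. -/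
noncomputable def arcosh (x : ℝ) : ℝ := Real.log (x + Real.sqrt (x ^ 2 - 1))

/-- The argument of `arcosh` in the Klein–Beltrami distance. -/
noncomputable def kleinArg {n : ℕ} (x y : EuclideanSpace ℝ (Fin n)) : ℝ :=
  (1 - ⟪x, y⟫) / Real.sqrt ((1 - ‖x‖ ^ 2) * (1 - ‖y‖ ^ 2))

/-- The Klein–Beltrami distance on the open unit ball. -/
noncomputable def dK {n : ℕ} (x y : EuclideanSpace ℝ (Fin n)) : ℝ := arcosh (kleinArg x y)

/-- Lifted center `s_p = p / (2 √(1 - ‖p‖²))`. -/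
noncomputable def liftedCenter {n : ℕ} (p : EuclideanSpace ℝ (Fin n)) :
    EuclideanSpace ℝ (Fin n) :=
  (1 / (2 * Real.sqrt (1 - ‖p‖ ^ 2))) • p

/-- Lifted weight `w_p = ‖p‖² / (4 (1 - ‖p‖²)) - 1 / √(1 - ‖p‖²)`. -/
noncomputable def liftedWeight {n : ℕ} (p : EuclideanSpace ℝ (Fin n)) : ℝ :=
  ‖p‖ ^ 2 / (4 * (1 - ‖p‖ ^ 2)) - 1 / Real.sqrt (1 - ‖p‖ ^ 2)

/-- Euclidean power distance of `x` to a center `s` with weight `w`. -/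
noncomputable def powerDist {n : ℕ} (x s : EuclideanSpace ℝ (Fin n)) (w : ℝ) : ℝ :=
  ‖x - s‖ ^ 2 - w

/-!
The power distance to the lifted site is `‖x‖² + (1 - ⟪x, p⟫) / √(1 - ‖p‖²)`: the `‖p‖²` terms of
`‖x - s_p‖²` and `w_p` cancel. Dividing the second summand by `√(1 - ‖x‖²)` gives `cosh (d_K x p)`,
so for fixed `x` both sides compare the same quantity, and `arcosh` is monotone.
-/

theorem arcosh_eq_real_arcosh : arcosh = Real.arcosh := rfl

section

variable {n : ℕ}

theorem kleinArg_pos {x y : EuclideanSpace ℝ (Fin n)} (hx : ‖x‖ < 1) (hy : ‖y‖ < 1) :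
    0 < kleinArg x y := by
  have hxy : ⟪x, y⟫ < 1 := by
    nlinarith [real_inner_le_norm x y, norm_nonneg x, norm_nonneg y]
  have hx2 : 0 < 1 - ‖x‖ ^ 2 := by nlinarith [norm_nonneg x]
  have hy2 : 0 < 1 - ‖y‖ ^ 2 := by nlinarith [norm_nonneg y]
  exact div_pos (sub_pos.2 hxy) (Real.sqrt_pos.2 (mul_pos hx2 hy2))

theorem kleinArg_eq_div_div {x : EuclideanSpace ℝ (Fin n)} (hx : ‖x‖ ≤ 1)
    (y : EuclideanSpace ℝ (Fin n)) :
    kleinArg x y = (1 - ⟪x, y⟫) / √(1 - ‖y‖ ^ 2) / √(1 - ‖x‖ ^ 2) := by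
  have hx2 : 0 ≤ 1 - ‖x‖ ^ 2 := by nlinarith [norm_nonneg x]
  rw [kleinArg, Real.sqrt_mul hx2, mul_comm, div_div]

theorem powerDist_liftedCenter_liftedWeight (x : EuclideanSpace ℝ (Fin n))
    {p : EuclideanSpace ℝ (Fin n)} (hp : ‖p‖ < 1) :
    powerDist x (liftedCenter p) (liftedWeight p) = ‖x‖ ^ 2 + (1 - ⟪x, p⟫) / √(1 - ‖p‖ ^ 2) := by
  have hp2 : 0 < 1 - ‖p‖ ^ 2 := by nlinarith [norm_nonneg p]
  rw [powerDist, liftedCenter, liftedWeight, norm_sub_sq_real, real_inner_smul_right, norm_smul,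
    Real.norm_of_nonneg (by positivity)]
  have hB : 0 < √(1 - ‖p‖ ^ 2) := Real.sqrt_pos.2 hp2
  have hB2 : 1 - ‖p‖ ^ 2 = √(1 - ‖p‖ ^ 2) ^ 2 := (Real.sq_sqrt hp2.le).symm
  set B := √(1 - ‖p‖ ^ 2)
  rw [hB2]
  field_simp
  ring

end

theorem dK_le_iff_powerDist_le {n : ℕ} (x p q : EuclideanSpace ℝ (Fin n))
    (hx : ‖x‖ < 1) (hp : ‖p‖ < 1) (hq : ‖q‖ < 1) :
    dK x p ≤ dK x q ↔
      powerDist x (liftedCenter p) (liftedWeight p)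
        ≤ powerDist x (liftedCenter q) (liftedWeight q) := by
  have hx2 : 0 < √(1 - ‖x‖ ^ 2) := Real.sqrt_pos.2 (by nlinarith [norm_nonneg x])
  rw [dK, dK, arcosh_eq_real_arcosh,
    Real.arcosh_le_arcosh (kleinArg_pos hx hp) (kleinArg_pos hx hq),
    kleinArg_eq_div_div hx.le, kleinArg_eq_div_div hx.le, div_le_div_iff_of_pos_right hx2,
    powerDist_liftedCenter_liftedWeight x hp, powerDist_liftedCenter_liftedWeight x hq,
    add_le_add_iff_left]
end

section
/- (Theorem: hyperbolic Voronoi cells are restrictions of Euclidean power cells.) Let P be a finite set of points in the open unit ball 𝕂ⁿ of ℝⁿ, and for each p ∈ P let s_p = p/(2√(1 − ‖p‖²)) and w_p = ‖p‖²/(4(1 − ‖p‖²)) − 1/√(1 − ‖p‖²). Then for every p ∈ P, the hyperbolic Voronoi cell V(p) = {x ∈ 𝕂ⁿ : ∀ q ∈ P, d_K(x,q) ≥ d_K(x,p)} equals the restriction to 𝕂ⁿ of the Euclidean power cell, i.e. V(p) = {x ∈ 𝕂ⁿ : ∀ q ∈ P, ‖x − s_q‖² − w_q ≥ ‖x − s_p‖²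 − w_p}. -/
open RealInnerProductSpace

/-!
For `x` in the ball, expanding the power distance gives
`‖x - s_q‖² - w_q = ‖x‖² + √(1 - ‖x‖²) · cosh (d_K(x, q))`,
an increasing affine function of `cosh (d_K(x, q))` whose coefficients depend on `x` alone.
As `arcosh` is increasing, `x` is then closer to `p` than to `q` in `d_K` exactly when its power
distance to `(s_p, w_p)` is at most that to `(s_q, w_q)`.
-/

lemma one_sub_norm_sq_pos {E : Type*} [SeminormedAddGroup E] {x : E} (hx : ‖x‖ < 1) :
    0 < 1 - ‖x‖ ^ 2 := by
  nlinarith [norm_nonneg x]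

lemma one_sub_inner_pos {F : Type*} [NormedAddCommGroup F] [InnerProductSpace ℝ F] {x y : F}
    (hx : ‖x‖ < 1) (hy : ‖y‖ < 1) : 0 < 1 - ⟪x, y⟫ := by
  have : ‖x‖ * ‖y‖ < 1 := by nlinarith [norm_nonneg x, norm_nonneg y]
  linarith [real_inner_le_norm x y]

section

variable {n : ℕ} {x p q : EuclideanSpace ℝ (Fin n)}

lemma kleinArg_pos_s7 (hx : ‖x‖ < 1) (hq : ‖q‖ < 1) : 0 < kleinArg x q := by
  have := one_sub_norm_sq_pos hx
  have := one_sub_norm_sq_pos hq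
  have := one_sub_inner_pos hx hq
  unfold kleinArg
  positivity

lemma powerDist_liftedCenter_liftedWeight_s7 (hx : ‖x‖ < 1) (hq : ‖q‖ < 1) :
    powerDist x (liftedCenter q) (liftedWeight q)
      = ‖x‖ ^ 2 + √(1 - ‖x‖ ^ 2) * kleinArg x q := by
  have hx' : 0 < √(1 - ‖x‖ ^ 2) := Real.sqrt_pos.2 (one_sub_norm_sq_pos hx)
  have hq' := one_sub_norm_sq_pos hq
  have hs2 : √(1 - ‖q‖ ^ 2) ^ 2 = 1 - ‖q‖ ^ 2 := Real.sq_sqrt hq'.le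
  rw [powerDist, liftedCenter, liftedWeight, kleinArg, Real.sqrt_mul' _ hq'.le, norm_sub_sq_real,
    real_inner_smul_right, norm_smul, Real.norm_of_nonneg (by positivity)]
  field_simp
  linear_combination (-4 * ‖q‖ ^ 2) * hs2

-- `arcosh` is definitionally `Real.arcosh`, so Mathlib's monotonicity applies.
lemma dK_le_dK_iff_powerDist_le (hx : ‖x‖ < 1) (hp : ‖p‖ < 1) (hq : ‖q‖ < 1) :
    dK x p ≤ dK x q ↔
      powerDist x (liftedCenter p) (liftedWeight p)
        ≤ powerDist x (liftedCenter q) (liftedWeight q) := by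
  have hx' : 0 < √(1 - ‖x‖ ^ 2) := Real.sqrt_pos.2 (one_sub_norm_sq_pos hx)
  rw [powerDist_liftedCenter_liftedWeight_s7 hx hp, powerDist_liftedCenter_liftedWeight_s7 hx hq,
    add_le_add_iff_left, mul_le_mul_iff_right₀ hx']
  exact Real.arcosh_le_arcosh (kleinArg_pos_s7 hx hp) (kleinArg_pos_s7 hx hq)

end

theorem hyperbolic_voronoi_eq_power_cell {n : ℕ} (P : Finset (EuclideanSpace ℝ (Fin n)))
    (hP : ∀ p ∈ P, ‖p‖ < 1) (p : EuclideanSpace ℝ (Fin n)) (hp : p ∈ P) :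
    {x : EuclideanSpace ℝ (Fin n) | ‖x‖ < 1 ∧ ∀ q ∈ P, dK x p ≤ dK x q}
      = {x : EuclideanSpace ℝ (Fin n) | ‖x‖ < 1 ∧ ∀ q ∈ P,
          powerDist x (liftedCenter p) (liftedWeight p)
            ≤ powerDist x (liftedCenter q) (liftedWeight q)} := by
  ext x
  exact and_congr_right fun hx =>
    forall₂_congr fun q hq => dK_le_dK_iff_powerDist_le hx (hP p hp) (hP q hq)
end
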